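/- If V is a k-vector space with a countably infinite basis, then the set of endomorphisms of V with finite-dimensional image forms a two-sided ideal of End_k(V), and this ideal is the unique maximal two-sided ideal of End_k(V). -/

import Mathlib

/-!
If `f` has infinite rank and `dim V = ℵ₀`, then `V` embeds linearly into `range f`. Lifting this
embedding through `f` to get `h`, and letting `g` be a projection of `V` onto `range f` followed
by a left inverse of the embedding, gives `g f h = 1`. So every two-sided ideal containing an
endomorphism of infinite rank is the whole ring, while the finite-rank ideal is proper because `V`
is infinite-dimensional: it is the unique maximal two-sided ideal.
-/

open Cardinal

universe u v w

section FiniteRankIdeal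

variable (K V : Type*) [DivisionRing K] [AddCommGroup V] [Module K V]

def finiteRankIdeal : TwoSidedIdeal (Module.End K V) :=
  .mk' {f | FiniteDimensional K (LinearMap.range f)}
    (show FiniteDimensional K (LinearMap.range 0) by rw [LinearMap.range_zero]; infer_instance)
    (fun {f g} (_ : FiniteDimensional K _) (_ : FiniteDimensional K _) ↦
      Submodule.finiteDimensional_of_le (LinearMap.range_add_le f g))
    (fun {f} (hf : FiniteDimensional K _) ↦
      show FiniteDimensional K (LinearMap.range (-f)) by rwa [LinearMap.range_neg])
    (fun {f g} (_ : FiniteDimensional K _) ↦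
      show FiniteDimensional K (LinearMap.range (f ∘ₗ g)) by
        rw [LinearMap.range_comp]; infer_instance)
    (fun {f g} (_ : FiniteDimensional K _) ↦
      Submodule.finiteDimensional_of_le (LinearMap.range_comp_le_range g f))

variable {K V}

@[simp]
theorem mem_finiteRankIdeal {f : Module.End K V} :
    f ∈ finiteRankIdeal K V ↔ FiniteDimensional K (LinearMap.range f) :=
  TwoSidedIdeal.mem_mk' ..

theorem finiteRankIdeal_ne_top (hV : ¬ FiniteDimensional K V) : finiteRankIdeal K V ≠ ⊤ := by
  intro h
  have h1 : (1 : Module.End K V) ∈ finiteRankIdeal K V := h ▸ TwoSidedIdeal.mem_top _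
  rw [mem_finiteRankIdeal, Module.End.one_eq_id, LinearMap.range_id] at h1
  exact hV (Module.Finite.equiv Submodule.topEquiv)

end FiniteRankIdeal

theorem LinearMap.exists_comp_comp_eq_id_of_rank_le {K : Type u} {V : Type v} {W : Type w}
    [DivisionRing K] [AddCommGroup V] [Module K V] [AddCommGroup W] [Module K W] (f : V →ₗ[K] W)
    (hf : lift.{w} (Module.rank K V) ≤ lift.{v} f.rank) :
    ∃ (g : W →ₗ[K] V) (h : V →ₗ[K] V), g ∘ₗ f ∘ₗ h = LinearMap.id := by
  obtain ⟨j, hj⟩ := lift_rank_le_iff_exists_linearMap.1 hf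
  obtain ⟨r, hr⟩ := j.exists_leftInverse_of_injective (LinearMap.ker_eq_bot.2 hj)
  obtain ⟨p, hp⟩ := (LinearMap.range f).subtype.exists_leftInverse_of_injective
    (Submodule.ker_subtype _)
  obtain ⟨s, hs⟩ := f.rangeRestrict.exists_rightInverse_of_surjective f.range_rangeRestrict
  refine ⟨r ∘ₗ p, s ∘ₗ j, LinearMap.ext fun v ↦ ?_⟩
  have hfs : ∀ y, f (s y) = y := fun y ↦ congrArg Subtype.val (LinearMap.congr_fun hs y)
  have hpy : ∀ y : LinearMap.range f, p y = y := LinearMap.congr_fun hp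
  show r (p (f (s (j v)))) = v
  rw [hfs, hpy]
  exact LinearMap.congr_fun hr v

theorem TwoSidedIdeal.eq_top_of_mem_of_rank_le {K V : Type*} [DivisionRing K] [AddCommGroup V]
    [Module K V] {J : TwoSidedIdeal (Module.End K V)} {f : Module.End K V} (hfJ : f ∈ J)
    (hf : Module.rank K V ≤ f.rank) : J = ⊤ := by
  obtain ⟨g, h, hgfh⟩ := f.exists_comp_comp_eq_id_of_rank_le (by simpa using hf)
  rw [← J.one_mem_iff, Module.End.one_eq_id, ← hgfh]
  exact J.mul_mem_left g _ (J.mul_mem_right f h hfJ)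

theorem eq_top_of_not_le_finiteRankIdeal {K V : Type*} [DivisionRing K] [AddCommGroup V]
    [Module K V] (hV : Module.rank K V ≤ ℵ₀) {J : TwoSidedIdeal (Module.End K V)}
    (hJ : ¬ J ≤ finiteRankIdeal K V) : J = ⊤ := by
  obtain ⟨f, hfJ, hf⟩ := SetLike.not_le_iff_exists.1 hJ
  have hrank : ℵ₀ ≤ f.rank :=
    not_lt.1 fun h ↦ hf (mem_finiteRankIdeal.2 (Module.rank_lt_aleph0_iff.1 h))
  exact J.eq_top_of_mem_of_rank_le hfJ (hV.trans hrank)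

section UniqueCoatom

variable {α : Type*} [PartialOrder α] [OrderTop α] {a : α}

theorem isCoatom_of_forall_not_le_eq_top (ha : a ≠ ⊤) (h : ∀ b, ¬ b ≤ a → b = ⊤) :
    IsCoatom a :=
  ⟨ha, fun b hab ↦ h b hab.not_ge⟩

theorem IsCoatom.eq_of_forall_not_le_eq_top {b : α} (hb : IsCoatom b) (ha : a ≠ ⊤)
    (h : ∀ c, ¬ c ≤ a → c = ⊤) : b = a :=
  ((hb.le_iff_eq ha).1 (not_not.1 fun hba ↦ hb.1 (h b hba))).symm

end UniqueCoatom

/-- If `V` has a countably infinite basis, the finite-rank endomorphisms form a two-sided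
ideal of `End_k(V)`, which is the unique maximal two-sided ideal. -/
theorem end_countable_basis_unique_max (k V : Type*) [Field k] [AddCommGroup V] [Module k V]
    (b : Module.Basis ℕ k V) :
    ∃ I : TwoSidedIdeal (Module.End k V),
      (∀ f : Module.End k V, f ∈ I ↔ FiniteDimensional k (LinearMap.range f)) ∧
      IsCoatom I ∧ ∀ J : TwoSidedIdeal (Module.End k V), IsCoatom J → J = I := by
  have hrank : Module.rank k V = ℵ₀ := by simpa using b.mk_eq_rank.symm
  have hV : ¬ FiniteDimensional k V := Module.not_finite_of_infinite_basis b
  have hne := finiteRankIdeal_ne_top hV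
  have hmax : ∀ J, ¬ J ≤ finiteRankIdeal k V → J = ⊤ :=
    fun _ ↦ eq_top_of_not_le_finiteRankIdeal hrank.le
  exact ⟨finiteRankIdeal k V, fun _ ↦ mem_finiteRankIdeal,
    isCoatom_of_forall_not_le_eq_top hne hmax,
    fun _ hJ ↦ hJ.eq_of_forall_not_le_eq_top hne hmax⟩
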